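/- arXiv:2511.02647 — 5 statements merged into one kernel-verified Lean document; each statement's English description precedes it below -/
import Mathlib

section
/- Let A, Â, F : E → E be maps such that Â is ρ-Lipschitz, F is θ-Lipschitz (with ρ, θ > 0), and ‖A X − Â X‖_F ≤ σ for every X ∈ E, where σ ≥ 0. Define the local block update G(X) = X + A(X) + F(X + A(X)) and the global block update Ĝ(X) = X + Â(X) + F(X + Â(X)). Then for all X, X̌ ∈ E: ‖G(X) − Ĝ(X̌)‖_F ≤ (1+ρ)(1+θ)·‖X − X̌‖_F + (1+θ)·σ. (Theorem 2 of the paper: one-local-forward deviation bound between federated and centralized attention.) -/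
/-!
Statement 0 (Theorem 2 of the paper): one-local-forward deviation bound between
the federated (local) block update `G(X) = X + A X + F (X + A X)` and the
centralized (global) block update `Ĝ(X̌) = X̌ + Â X̌ + F (X̌ + Â X̌)`,
where `E` is the space of real `L × d` matrices with the Frobenius norm.
-/

attribute [local instance] Matrix.frobeniusNormedAddCommGroup

theorem fedattn_one_forward_deviation
    (L d : ℕ) (hL : 0 < L) (hd : 0 < d)
    (A Ahat F : Matrix (Fin L) (Fin d) ℝ → Matrix (Fin L) (Fin d) ℝ)
    (ρ θ σ : ℝ) (hρ : 0 < ρ) (hθ : 0 < θ) (hσ : 0 ≤ σ)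
    (hAhat : ∀ X Y, ‖Ahat X - Ahat Y‖ ≤ ρ * ‖X - Y‖)
    (hF : ∀ X Y, ‖F X - F Y‖ ≤ θ * ‖X - Y‖)
    (hdev : ∀ X, ‖A X - Ahat X‖ ≤ σ) :
    ∀ X Xc : Matrix (Fin L) (Fin d) ℝ,
      ‖(X + A X + F (X + A X)) - (Xc + Ahat Xc + F (Xc + Ahat Xc))‖ ≤
        (1 + ρ) * (1 + θ) * ‖X - Xc‖ + (1 + θ) * σ := by
  intro X Xc
  set U := X + A X with hU
  set V := Xc + Ahat Xc with hV
  have hUV : ‖U - V‖ ≤ (1 + ρ) * ‖X - Xc‖ + σ := by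
    have h1 : U - V = (X - Xc) + (Ahat X - Ahat Xc) + (A X - Ahat X) := by
      simp only [hU, hV]; abel
    calc ‖U - V‖ ≤ ‖(X - Xc) + (Ahat X - Ahat Xc)‖ + ‖A X - Ahat X‖ := by
          rw [h1]; exact norm_add_le _ _
      _ ≤ ‖X - Xc‖ + ‖Ahat X - Ahat Xc‖ + ‖A X - Ahat X‖ := by
          gcongr; exact norm_add_le _ _
      _ ≤ ‖X - Xc‖ + ρ * ‖X - Xc‖ + σ := by gcongr; exacts [hAhat X Xc, hdev X]
      _ = (1 + ρ) * ‖X - Xc‖ + σ := by ring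
  have h2 : U + F U - (V + F V) = (U - V) + (F U - F V) := by abel
  calc ‖U + F U - (V + F V)‖ ≤ ‖U - V‖ + ‖F U - F V‖ := by
        rw [h2]; exact norm_add_le _ _
    _ ≤ ‖U - V‖ + θ * ‖U - V‖ := by gcongr; exact hF U V
    _ = (1 + θ) * ‖U - V‖ := by ring
    _ ≤ (1 + θ) * ((1 + ρ) * ‖X - Xc‖ + σ) := by
        gcongr
    _ = (1 + ρ) * (1 + θ) * ‖X - Xc‖ + (1 + θ) * σ := by ring
end

section
/- Let H ≥ 1 be an integer. For each h ∈ {1, …, H} let Â_h, F_h : E → E with Â_h ρ_h-Lipschitz and F_h θ_h-Lipschitz (ρ_h, θ_h > 0), and for each h ∈ {1, …, H−1} let A_h : E → E satisfy ‖A_h X − Â_h X‖_F ≤ σ_h for all X ∈ E (σ_h ≥ 0). Given X_1, X̌_1 ∈ E, define recursively X_{h+1} = X_h + A_h(X_h) + F_h(X_h + A_h(X_h)) for h = 1, …, H−1, X_{H+1} = X_H + Â_H(X_H) + F_H(X_H + Â_H(X_H)), and X̌_{h+1} = X̌_h + Â_h(X̌_h) + F_h(X̌_h + Â_h(X̌_h))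 for h = 1, …, H. Then ‖X_{H+1} − X̌_{H+1}‖_F ≤ (∏_{i=1}^{H} (1+θ_i)(1+ρ_i))·‖X_1 − X̌_1‖_F + Σ_{h=1}^{H−1} (1+θ_h)·σ_h·∏_{i=h+1}^{H} (1+θ_i)(1+ρ_i). (Lemma 1 of the paper: per-communication-round deviation bound when the H-th forward performs global self-attention.) -/
/-!
Each Transformer block is the composition of the residual maps `x ↦ x + G x` and
`u ↦ u + F u`. Against the centralized block, the first amplifies the deviation by `1 + ρ`
and adds at most `σ` (the attention error), the second amplifies it by `1 + θ`. The global
forward is the case `σ = 0`, and the discrete Grönwall inequality sums the one-step bounds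
over the round.
-/

attribute [local instance] Matrix.frobeniusNormedAddCommGroup

open Finset

theorem discrete_gronwall_prod_Icc {u b c : ℕ → ℝ} {n₀ N : ℕ}
    (hu : ∀ n ∈ Icc n₀ N, u (n + 1) ≤ c n * u n + b n) (hc : ∀ n ∈ Icc n₀ N, 0 ≤ c n)
    (hN : n₀ ≤ N + 1) :
    u (N + 1) ≤ (∏ i ∈ Icc n₀ N, c i) * u n₀ + ∑ k ∈ Icc n₀ N, b k * ∏ i ∈ Icc (k + 1) N, c i := by
  -- beyond `N` the recursion is made trivially true by `c' n = 0`, `b' n = u (n + 1)`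
  set c' : ℕ → ℝ := fun n => if n ≤ N then c n else 0
  set b' : ℕ → ℝ := fun n => if n ≤ N then b n else u (n + 1)
  have key := discrete_gronwall_prod_general (u := u) (b := b') (c := c') (n₀ := n₀)
    (fun n hn => by
      by_cases h : n ≤ N
      · simpa [c', b', h] using hu n (mem_Icc.2 ⟨hn, h⟩)
      · simp [c', b', h])
    (fun n hn => by
      by_cases h : n ≤ N
      · simpa [c', h] using hc n (mem_Icc.2 ⟨hn, h⟩)
      · simp [c', h]) hN
  have hprod : ∀ k, ∏ i ∈ Icc k N, c' i = ∏ i ∈ Icc k N, c i := fun k =>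
    prod_congr rfl fun i hi => if_pos (mem_Icc.1 hi).2
  simp only [Ico_add_one_right_eq_Icc, hprod] at key
  rw [mul_comm] at key
  refine key.trans_eq (congrArg _ (sum_congr rfl fun k hk => ?_))
  simp only [b', if_pos (mem_Icc.1 hk).2]

section ResidualBlock

variable {E : Type*} [SeminormedAddCommGroup E]

theorem norm_add_apply_sub_add_apply_le {G Ĝ : E → E} {ρ s : ℝ}
    (hĜ : ∀ x y, ‖Ĝ x - Ĝ y‖ ≤ ρ * ‖x - y‖) {x : E} (hG : ‖G x - Ĝ x‖ ≤ s) (y : E) :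
    ‖(x + G x) - (y + Ĝ y)‖ ≤ (1 + ρ) * ‖x - y‖ + s :=
  calc ‖(x + G x) - (y + Ĝ y)‖ = ‖(x - y) + (G x - Ĝ x) + (Ĝ x - Ĝ y)‖ := by congr 1; abel
    _ ≤ ‖x - y‖ + ‖G x - Ĝ x‖ + ‖Ĝ x - Ĝ y‖ := norm_add₃_le
    _ ≤ ‖x - y‖ + s + ρ * ‖x - y‖ := by gcongr; exact hĜ x y
    _ = (1 + ρ) * ‖x - y‖ + s := by ring

theorem norm_add_apply_sub_add_apply_le_of_lipschitz {F : E → E} {θ : ℝ}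
    (hF : ∀ x y, ‖F x - F y‖ ≤ θ * ‖x - y‖) (x y : E) :
    ‖(x + F x) - (y + F y)‖ ≤ (1 + θ) * ‖x - y‖ := by
  simpa using norm_add_apply_sub_add_apply_le hF (by simp : ‖F x - F x‖ ≤ 0) y

theorem norm_block_sub_block_le {G Ĝ F : E → E} {ρ θ s : ℝ} (hθ : 0 ≤ θ)
    (hĜ : ∀ x y, ‖Ĝ x - Ĝ y‖ ≤ ρ * ‖x - y‖) (hF : ∀ x y, ‖F x - F y‖ ≤ θ * ‖x - y‖)
    {x : E} (hG : ‖G x - Ĝ x‖ ≤ s) (y : E) :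
    ‖(x + G x + F (x + G x)) - (y + Ĝ y + F (y + Ĝ y))‖ ≤
      (1 + θ) * (1 + ρ) * ‖x - y‖ + (1 + θ) * s :=
  calc _ ≤ (1 + θ) * ‖(x + G x) - (y + Ĝ y)‖ :=
        norm_add_apply_sub_add_apply_le_of_lipschitz hF _ _
    _ ≤ (1 + θ) * ((1 + ρ) * ‖x - y‖ + s) := by
        gcongr; exact norm_add_apply_sub_add_apply_le hĜ hG y
    _ = _ := by ring

end ResidualBlock

theorem fedattn_round_deviation_general
    (L d : ℕ) (H : ℕ)
    (A Ahat F : ℕ → Matrix (Fin L) (Fin d) ℝ → Matrix (Fin L) (Fin d) ℝ)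
    (ρ θ σ : ℕ → ℝ)
    (hρ : ∀ h ∈ Finset.Icc 1 H, 0 < ρ h)
    (hθ : ∀ h ∈ Finset.Icc 1 H, 0 < θ h)
    (hAhat : ∀ h ∈ Finset.Icc 1 H, ∀ X Y, ‖Ahat h X - Ahat h Y‖ ≤ ρ h * ‖X - Y‖)
    (hF : ∀ h ∈ Finset.Icc 1 H, ∀ X Y, ‖F h X - F h Y‖ ≤ θ h * ‖X - Y‖)
    (hdev : ∀ h ∈ Finset.Icc 1 (H - 1), ∀ X, ‖A h X - Ahat h X‖ ≤ σ h)
    (X Xc : ℕ → Matrix (Fin L) (Fin d) ℝ)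
    (hXloc : ∀ h ∈ Finset.Icc 1 (H - 1),
      X (h + 1) = X h + A h (X h) + F h (X h + A h (X h)))
    (hXglob : X (H + 1) = X H + Ahat H (X H) + F H (X H + Ahat H (X H)))
    (hXc : ∀ h ∈ Finset.Icc 1 H,
      Xc (h + 1) = Xc h + Ahat h (Xc h) + F h (Xc h + Ahat h (Xc h))) :
    ‖X (H + 1) - Xc (H + 1)‖ ≤
      (∏ i ∈ Finset.Icc 1 H, (1 + θ i) * (1 + ρ i)) * ‖X 1 - Xc 1‖ +
        ∑ h ∈ Finset.Icc 1 (H - 1),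
          (1 + θ h) * σ h * ∏ i ∈ Finset.Icc (h + 1) H, (1 + θ i) * (1 + ρ i) := by
  -- the attention error at forward `k`; it vanishes at the global forward `k = H`
  set s : ℕ → ℝ := fun k => if k < H then σ k else 0
  have hstep : ∀ k ∈ Icc 1 H, ‖X (k + 1) - Xc (k + 1)‖ ≤
      (1 + θ k) * (1 + ρ k) * ‖X k - Xc k‖ + (1 + θ k) * s k := by
    intro k hk
    rw [hXc k hk]
    by_cases hkH : k < H
    · have hk' : k ∈ Icc 1 (H - 1) := by simp only [mem_Icc] at hk ⊢; omega
      rw [hXloc k hk']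
      exact norm_block_sub_block_le (hθ k hk).le (hAhat k hk) (hF k hk)
        ((hdev k hk' _).trans_eq (if_pos hkH).symm) _
    · obtain rfl : k = H := by simp only [mem_Icc] at hk; omega
      rw [hXglob]
      exact norm_block_sub_block_le (hθ k hk).le (hAhat k hk) (hF k hk)
        (by simp [s]) _
  have hc : ∀ i ∈ Icc 1 H, 0 ≤ (1 + θ i) * (1 + ρ i) := fun i hi =>
    mul_nonneg (by linarith [hθ i hi]) (by linarith [hρ i hi])
  refine (discrete_gronwall_prod_Icc (u := fun k => ‖X k - Xc k‖) hstep hc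
    (Nat.le_add_left 1 H)).trans_eq (congrArg _ ?_)
  have hIcc : Icc 1 (H - 1) = (Icc 1 H).filter (· < H) := by
    ext; simp only [mem_Icc, mem_filter]; omega
  rw [hIcc, sum_filter]
  refine sum_congr rfl fun k _ => ?_
  by_cases hkH : k < H <;> simp [s, hkH]

theorem fedattn_round_deviation
    (L d : ℕ) (hL : 0 < L) (hd : 0 < d) (H : ℕ) (hH : 1 ≤ H)
    (A Ahat F : ℕ → Matrix (Fin L) (Fin d) ℝ → Matrix (Fin L) (Fin d) ℝ)
    (ρ θ σ : ℕ → ℝ)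
    (hρ : ∀ h ∈ Finset.Icc 1 H, 0 < ρ h)
    (hθ : ∀ h ∈ Finset.Icc 1 H, 0 < θ h)
    (hσ : ∀ h ∈ Finset.Icc 1 (H - 1), 0 ≤ σ h)
    (hAhat : ∀ h ∈ Finset.Icc 1 H, ∀ X Y, ‖Ahat h X - Ahat h Y‖ ≤ ρ h * ‖X - Y‖)
    (hF : ∀ h ∈ Finset.Icc 1 H, ∀ X Y, ‖F h X - F h Y‖ ≤ θ h * ‖X - Y‖)
    (hdev : ∀ h ∈ Finset.Icc 1 (H - 1), ∀ X, ‖A h X - Ahat h X‖ ≤ σ h)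
    (X Xc : ℕ → Matrix (Fin L) (Fin d) ℝ)
    (hXloc : ∀ h ∈ Finset.Icc 1 (H - 1),
      X (h + 1) = X h + A h (X h) + F h (X h + A h (X h)))
    (hXglob : X (H + 1) = X H + Ahat H (X H) + F H (X H + Ahat H (X H)))
    (hXc : ∀ h ∈ Finset.Icc 1 H,
      Xc (h + 1) = Xc h + Ahat h (Xc h) + F h (Xc h + Ahat h (Xc h))) :
    ‖X (H + 1) - Xc (H + 1)‖ ≤
      (∏ i ∈ Finset.Icc 1 H, (1 + θ i) * (1 + ρ i)) * ‖X 1 - Xc 1‖ +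
        ∑ h ∈ Finset.Icc 1 (H - 1),
          (1 + θ h) * σ h * ∏ i ∈ Finset.Icc (h + 1) H, (1 + θ i) * (1 + ρ i) :=
  fedattn_round_deviation_general L d H A Ahat F ρ θ σ hρ hθ hAhat hF hdev X Xc hXloc hXglob hXc
end

section
/- Let H, T ≥ 1 be integers and M = HT, with blocks indexed m = Ht + h for t ∈ {0, …, T−1} and h ∈ {1, …, H}. For each block m ∈ {1, …, M} let Â_m, F_m : E → E with Â_m ρ_m-Lipschitz and F_m θ_m-Lipschitz (ρ_m, θ_m > 0), and let A_m : E → E satisfy ‖A_m X − Â_m X‖_F ≤ Σ_{n=1}^{N} σ_{m,n} for all X ∈ E (σ_{m,n} ≥ 0, N ≥ 1 participants). Starting from the same X^{emb} ∈ E, let the FedAttn trajectory apply block updates X ↦ X + A_m(X) + F_m(X + A_m(X)) at blocks with h ∈ {1, …, H−1} and X ↦ X + Â_m(X) + F_m(X + Â_m(X)) at blocks with h = H, and let the centralized trajectory apply X ↦ X + Â_m(X) + F_m(X + Â_m(X)) at every block. Denote by X^T and X^* the respective outputs after all M blocks. Then ‖X^T − X^*‖_F ≤ Σ_{t=0}^{T−1}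 Σ_{h=1}^{H−1} [(1+θ_{Ht+h})·Σ_{n=1}^{N} σ_{Ht+h,n}] · [∏_{i=h+1}^{H} (1+θ_{Ht+i})(1+ρ_{Ht+i})] · [∏_{j=t+1}^{T−1} ∏_{i=1}^{H} (1+θ_{Hj+i})(1+ρ_{Hj+i})]. (Theorem 1 of the paper.) -/
/-!
Since `Â_m` is `ρ_m`-Lipschitz, `F_m` is `θ_m`-Lipschitz and `A_m` stays within `Σ_n σ_{m,n}`
of `Â_m`, one block multiplies the FedAttn/CenAttn error by at most `(1 + θ_m)(1 + ρ_m)` and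
adds at most `(1 + θ_m) Σ_n σ_{m,n}`, the latter only at local blocks (`H ∤ m`). Unrolling this
recursion, the error is a sum over local blocks `m` of the deviation injected at `m`, amplified
by the factors of all later blocks; writing `m = H t + h` and splitting the later blocks into the
rest of round `t` and the full rounds `t + 1, …, T - 1` gives the bound.
-/

attribute [local instance] Matrix.frobeniusNormedAddCommGroup

open Finset

def transformerBlock {E : Type*} [Add E] (A F : E → E) (X : E) : E :=
  X + A X + F (X + A X)

lemma norm_transformerBlock_sub_le {E : Type*} [SeminormedAddCommGroup E] {A Ahat F : E → E}
    {ρ θ s : ℝ} (hθ : 0 ≤ θ) (hAhat : ∀ X Y, ‖Ahat X - Ahat Y‖ ≤ ρ * ‖X - Y‖)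
    (hF : ∀ X Y, ‖F X - F Y‖ ≤ θ * ‖X - Y‖) (hdev : ∀ X, ‖A X - Ahat X‖ ≤ s) (X Y : E) :
    ‖transformerBlock A F X - transformerBlock Ahat F Y‖ ≤
      (1 + θ) * (1 + ρ) * ‖X - Y‖ + (1 + θ) * s := by
  set u := X + A X - (Y + Ahat Y)
  have hu : ‖u‖ ≤ (1 + ρ) * ‖X - Y‖ + s :=
    calc ‖u‖ = ‖(X - Y) + (A X - Ahat X) + (Ahat X - Ahat Y)‖ := by
          simp only [u]; congr 1; abel
      _ ≤ ‖X - Y‖ + ‖A X - Ahat X‖ + ‖Ahat X - Ahat Y‖ := norm_add₃_le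
      _ ≤ ‖X - Y‖ + s + ρ * ‖X - Y‖ := by gcongr <;> apply_assumption
      _ = (1 + ρ) * ‖X - Y‖ + s := by ring
  calc ‖transformerBlock A F X - transformerBlock Ahat F Y‖
      = ‖u + (F (X + A X) - F (Y + Ahat Y))‖ := by
        simp only [transformerBlock, u]; congr 1; abel
    _ ≤ ‖u‖ + θ * ‖u‖ := norm_add_le_of_le le_rfl (hF _ _)
    _ = (1 + θ) * ‖u‖ := by ring
    _ ≤ (1 + θ) * ((1 + ρ) * ‖X - Y‖ + s) := by gcongr
    _ = (1 + θ) * (1 + ρ) * ‖X - Y‖ + (1 + θ) * s := by ring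

/-- Discrete Grönwall inequality. -/
lemma le_prod_mul_add_sum_of_succ_le {e b c : ℕ → ℝ} {n : ℕ}
    (hc : ∀ k < n, 0 ≤ c (k + 1)) (he : ∀ k < n, e (k + 1) ≤ c (k + 1) * e k + b (k + 1)) :
    e n ≤ (∏ i ∈ Ioc 0 n, c i) * e 0 + ∑ m ∈ Ioc 0 n, b m * ∏ i ∈ Ioc m n, c i := by
  induction n with
  | zero => simp
  | succ n ih =>
    have ih := ih (fun k hk => hc k (by omega)) (fun k hk => he k (by omega))
    have hsum : ∑ m ∈ Ioc 0 n, b m * ∏ i ∈ Ioc m (n + 1), c i =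
        c (n + 1) * ∑ m ∈ Ioc 0 n, b m * ∏ i ∈ Ioc m n, c i := by
      rw [mul_sum]
      refine sum_congr rfl fun m hm => ?_
      rw [prod_Ioc_succ_top (mem_Ioc.1 hm).2]
      ring
    rw [prod_Ioc_succ_top n.zero_le, sum_Ioc_succ_top n.zero_le, hsum, Ioc_self, prod_empty,
      mul_one]
    calc e (n + 1) ≤ c (n + 1) * e n + b (n + 1) := he n n.lt_succ_self
      _ ≤ c (n + 1) * ((∏ i ∈ Ioc 0 n, c i) * e 0 +
            ∑ m ∈ Ioc 0 n, b m * ∏ i ∈ Ioc m n, c i) + b (n + 1) := by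
        gcongr
        exact hc n n.lt_succ_self
      _ = _ := by ring

section Blocks

variable {M : Type*} [CommMonoid M]

@[to_additive]
lemma prod_Ioc_add_left (f : ℕ → M) (c a b : ℕ) :
    ∏ i ∈ Ioc a b, f (c + i) = ∏ i ∈ Ioc (c + a) (c + b), f i := by
  rw [← map_add_left_Ioc, prod_map]
  rfl

@[to_additive sum_Ioc_mul_eq_sum_Ico_sum_Ioc]
lemma prod_Ioc_mul_eq_prod_Ico_prod_Ioc (f : ℕ → M) (H a b : ℕ) :
    ∏ i ∈ Ioc (H * a) (H * b), f i = ∏ j ∈ Ico a b, ∏ i ∈ Ioc 0 H, f (H * j + i) := by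
  induction b with
  | zero => simp
  | succ b ih =>
    by_cases hab : a ≤ b
    · rw [prod_Ico_succ_top hab, ← ih, prod_Ioc_add_left, add_zero, mul_add_one,
        prod_Ioc_consecutive _ (Nat.mul_le_mul_left H hab) (Nat.le_add_right _ _)]
    · have hba : b + 1 ≤ a := by omega
      rw [Ioc_eq_empty_of_le (Nat.mul_le_mul_left H hba), Ico_eq_empty_of_le hba,
        prod_empty, prod_empty]

lemma prod_Ioc_mul_add_eq {f : ℕ → M} {H h t T : ℕ} (hh : h ≤ H) (ht : t < T) :
    ∏ i ∈ Ioc (H * t + h) (H * T), f i =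
      (∏ i ∈ Ioc h H, f (H * t + i)) * ∏ j ∈ Ico (t + 1) T, ∏ i ∈ Ioc 0 H, f (H * j + i) := by
  rw [prod_Ioc_add_left, ← prod_Ioc_mul_eq_prod_Ico_prod_Ioc, ← mul_add_one]
  exact (prod_Ioc_consecutive _ (by rw [Nat.mul_succ]; omega) (Nat.mul_le_mul_left H ht)).symm

end Blocks

lemma sum_Ioc_mul_eq_sum_range_sum_Icc {M : Type*} [AddCommMonoid M] {g : ℕ → M}
    {H T : ℕ} (hg : ∀ t < T, g (H * t + H) = 0) :
    ∑ m ∈ Ioc 0 (H * T), g m = ∑ t ∈ range T, ∑ h ∈ Icc 1 (H - 1), g (H * t + h) := by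
  rw [← mul_zero H, sum_Ioc_mul_eq_sum_Ico_sum_Ioc, ← range_eq_Ico]
  refine sum_congr rfl fun t ht => ?_
  rcases Nat.eq_zero_or_pos H with rfl | hH
  · simp
  · obtain ⟨H, rfl⟩ : ∃ H', H = H' + 1 := ⟨H - 1, by omega⟩
    rw [sum_Ioc_succ_top (Nat.zero_le _), hg t (mem_range.1 ht), add_zero,
      Nat.add_sub_cancel, ← Icc_add_one_left_eq_Ioc, zero_add]

theorem fedattn_error_bound_general
    (L d : ℕ)
    (H T N : ℕ)
    (A Ahat F : ℕ → Matrix (Fin L) (Fin d) ℝ → Matrix (Fin L) (Fin d) ℝ)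
    (ρ θ : ℕ → ℝ) (σ : ℕ → ℕ → ℝ)
    (hρ : ∀ m ∈ Finset.Icc 1 (H * T), 0 < ρ m)
    (hθ : ∀ m ∈ Finset.Icc 1 (H * T), 0 < θ m)
    (hAhat : ∀ m ∈ Finset.Icc 1 (H * T), ∀ X Y, ‖Ahat m X - Ahat m Y‖ ≤ ρ m * ‖X - Y‖)
    (hF : ∀ m ∈ Finset.Icc 1 (H * T), ∀ X Y, ‖F m X - F m Y‖ ≤ θ m * ‖X - Y‖)
    (hdev : ∀ m ∈ Finset.Icc 1 (H * T), ∀ X,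
      ‖A m X - Ahat m X‖ ≤ ∑ n ∈ Finset.Icc 1 N, σ m n)
    (Xemb : Matrix (Fin L) (Fin d) ℝ)
    (Xfed Xcen : ℕ → Matrix (Fin L) (Fin d) ℝ)
    (hfed0 : Xfed 0 = Xemb) (hcen0 : Xcen 0 = Xemb)
    (hfedLocal : ∀ m < H * T, ¬ H ∣ (m + 1) →
      Xfed (m + 1) =
        Xfed m + A (m + 1) (Xfed m) + F (m + 1) (Xfed m + A (m + 1) (Xfed m)))
    (hfedGlobal : ∀ m < H * T, H ∣ (m + 1) →
      Xfed (m + 1) =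
        Xfed m + Ahat (m + 1) (Xfed m) + F (m + 1) (Xfed m + Ahat (m + 1) (Xfed m)))
    (hcen : ∀ m < H * T,
      Xcen (m + 1) =
        Xcen m + Ahat (m + 1) (Xcen m) + F (m + 1) (Xcen m + Ahat (m + 1) (Xcen m))) :
    ‖Xfed (H * T) - Xcen (H * T)‖ ≤
      ∑ t ∈ Finset.range T, ∑ h ∈ Finset.Icc 1 (H - 1),
        ((1 + θ (H * t + h)) * ∑ n ∈ Finset.Icc 1 N, σ (H * t + h) n) *
          (∏ i ∈ Finset.Icc (h + 1) H, (1 + θ (H * t + i)) * (1 + ρ (H * t + i))) *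
          (∏ j ∈ Finset.Icc (t + 1) (T - 1), ∏ i ∈ Finset.Icc 1 H,
            (1 + θ (H * j + i)) * (1 + ρ (H * j + i))) := by
  have hmem : ∀ k < H * T, k + 1 ∈ Icc 1 (H * T) := fun k hk =>
    mem_Icc.2 ⟨by omega, by omega⟩
  have step : ∀ k < H * T, ‖Xfed (k + 1) - Xcen (k + 1)‖ ≤
      (1 + θ (k + 1)) * (1 + ρ (k + 1)) * ‖Xfed k - Xcen k‖ +
        if H ∣ k + 1 then 0 else (1 + θ (k + 1)) * ∑ n ∈ Icc 1 N, σ (k + 1) n := by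
    intro k hk
    have hk1 := hmem k hk
    have block {B : Matrix (Fin L) (Fin d) ℝ → Matrix (Fin L) (Fin d) ℝ} {s : ℝ}
        (hB : ∀ X, ‖B X - Ahat (k + 1) X‖ ≤ s) :=
      norm_transformerBlock_sub_le (hθ _ hk1).le (hAhat _ hk1) (hF _ hk1) hB (Xfed k) (Xcen k)
    rw [hcen k hk]
    split_ifs with hdvd
    · rw [hfedGlobal k hk hdvd]
      exact (block (s := 0) (by simp)).trans_eq (by ring)
    · rw [hfedLocal k hk hdvd]
      exact block (hdev _ hk1)
  have hc : ∀ k < H * T, 0 ≤ (1 + θ (k + 1)) * (1 + ρ (k + 1)) := fun k hk =>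
    mul_nonneg (by linarith [hθ _ (hmem k hk)]) (by linarith [hρ _ (hmem k hk)])
  have bound := le_prod_mul_add_sum_of_succ_le (e := fun k => ‖Xfed k - Xcen k‖)
    (c := fun m => (1 + θ m) * (1 + ρ m))
    (b := fun m => if H ∣ m then 0 else (1 + θ m) * ∑ n ∈ Icc 1 N, σ m n) hc step
  simp only [hfed0, hcen0, sub_self, norm_zero, mul_zero, zero_add] at bound
  refine bound.trans_eq (sum_Ioc_mul_eq_sum_range_sum_Icc fun t _ => ?_) |>.trans_eq ?_
  · rw [if_pos (dvd_add (dvd_mul_right H t) dvd_rfl), zero_mul]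
  refine sum_congr rfl fun t ht => sum_congr rfl fun h hh => ?_
  obtain ⟨h1, h2⟩ := mem_Icc.1 hh
  have hlocal : ¬ H ∣ H * t + h := fun hdvd =>
    Nat.not_dvd_of_pos_of_lt h1 (by omega) ((Nat.dvd_add_right (dvd_mul_right H t)).1 hdvd)
  have hIcc : Icc (t + 1) (T - 1) = Ico (t + 1) T := by
    ext; simp only [mem_Icc, mem_Ico]; omega
  rw [if_neg hlocal, prod_Ioc_mul_add_eq (by omega) (mem_range.1 ht), hIcc,
    ← Icc_add_one_left_eq_Ioc, ← Icc_add_one_left_eq_Ioc 0 H, zero_add]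
  ring

theorem fedattn_error_bound
    (L d : ℕ) (hL : 0 < L) (hd : 0 < d)
    (H T N : ℕ) (hH : 1 ≤ H) (hT : 1 ≤ T) (hN : 1 ≤ N)
    (A Ahat F : ℕ → Matrix (Fin L) (Fin d) ℝ → Matrix (Fin L) (Fin d) ℝ)
    (ρ θ : ℕ → ℝ) (σ : ℕ → ℕ → ℝ)
    (hρ : ∀ m ∈ Finset.Icc 1 (H * T), 0 < ρ m)
    (hθ : ∀ m ∈ Finset.Icc 1 (H * T), 0 < θ m)
    (hσ : ∀ m ∈ Finset.Icc 1 (H * T), ∀ n ∈ Finset.Icc 1 N, 0 ≤ σ m n)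
    (hAhat : ∀ m ∈ Finset.Icc 1 (H * T), ∀ X Y, ‖Ahat m X - Ahat m Y‖ ≤ ρ m * ‖X - Y‖)
    (hF : ∀ m ∈ Finset.Icc 1 (H * T), ∀ X Y, ‖F m X - F m Y‖ ≤ θ m * ‖X - Y‖)
    (hdev : ∀ m ∈ Finset.Icc 1 (H * T), ∀ X,
      ‖A m X - Ahat m X‖ ≤ ∑ n ∈ Finset.Icc 1 N, σ m n)
    (Xemb : Matrix (Fin L) (Fin d) ℝ)
    (Xfed Xcen : ℕ → Matrix (Fin L) (Fin d) ℝ)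
    (hfed0 : Xfed 0 = Xemb) (hcen0 : Xcen 0 = Xemb)
    (hfedLocal : ∀ m < H * T, ¬ H ∣ (m + 1) →
      Xfed (m + 1) =
        Xfed m + A (m + 1) (Xfed m) + F (m + 1) (Xfed m + A (m + 1) (Xfed m)))
    (hfedGlobal : ∀ m < H * T, H ∣ (m + 1) →
      Xfed (m + 1) =
        Xfed m + Ahat (m + 1) (Xfed m) + F (m + 1) (Xfed m + Ahat (m + 1) (Xfed m)))
    (hcen : ∀ m < H * T,
      Xcen (m + 1) =
        Xcen m + Ahat (m + 1) (Xcen m) + F (m + 1) (Xcen m + Ahat (m + 1) (Xcen m))) :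
    ‖Xfed (H * T) - Xcen (H * T)‖ ≤
      ∑ t ∈ Finset.range T, ∑ h ∈ Finset.Icc 1 (H - 1),
        ((1 + θ (H * t + h)) * ∑ n ∈ Finset.Icc 1 N, σ (H * t + h) n) *
          (∏ i ∈ Finset.Icc (h + 1) H, (1 + θ (H * t + i)) * (1 + ρ (H * t + i))) *
          (∏ j ∈ Finset.Icc (t + 1) (T - 1), ∏ i ∈ Finset.Icc 1 H,
            (1 + θ (H * j + i)) * (1 + ρ (H * j + i))) :=
  fedattn_error_bound_general L d H T N A Ahat F ρ θ σ hρ hθ hAhat hF hdev Xemb Xfed Xcen hfed0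
    hcen0 hfedLocal hfedGlobal hcen
end

section
/- Under the hypotheses of the previous setting, assume uniform constants: θ_m ≤ θ, ρ_m ≤ ρ, and σ_{m,n} ≤ σ_n for all blocks m ∈ {1, …, M} and participants n ∈ {1, …, N}, with θ, ρ > 0, and set γ = (1+θ)(1+ρ) (so γ > 1). Then with M = HT the FedAttn output X^T and centralized output X^* satisfy ‖X^T − X^*‖_F ≤ [(1+θ)·Σ_{n=1}^{N} σ_n] · [(γ^M − 1)/(γ − 1)] · [1 − (γ − 1)/(γ^H − 1)]. (Corollary 1 of the paper.) -/
/-!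
Since `Ahat m` is `ρ`-Lipschitz and `F m` is `θ`-Lipschitz, the residual block
`X ↦ X + G X + F (X + G X)` built on `G = Ahat m` is `γ`-Lipschitz, and building it on the local
attention `A m` instead costs at most `δ = (1 + θ) Σₙ σₙ`. The error `eₘ = ‖Xfedₘ - Xcenₘ‖` thus
obeys `eₘ₊₁ ≤ γ eₘ + cₘ₊₁` with `cₖ = δ` at local blocks and `cₖ = 0` at the synchronising blocks
`H ∣ k`. Unrolling from `e₀ = 0` bounds `e_M` by `δ` times the geometric sum `Σ_{i<M} γⁱ` with the
terms `H ∣ i` removed, and those terms form a geometric sum of ratio `γ^H`.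
-/

open Finset

theorem sum_range_mul_ite_dvd {M : Type*} [AddCommMonoid M] {H : ℕ} (hH : 0 < H) (T : ℕ)
    (f : ℕ → M) :
    ∑ i ∈ range (H * T), (if H ∣ i then f i else 0) = ∑ j ∈ range T, f (H * j) := by
  rw [← sum_filter]
  refine sum_nbij' (· / H) (H * ·) ?_ ?_ ?_ ?_ ?_
  · rintro _ hi
    obtain ⟨hlt, j, rfl⟩ := mem_filter.1 hi
    simpa [Nat.mul_div_cancel_left j hH, Nat.mul_lt_mul_left hH] using hlt
  · intro j hj
    simpa [Nat.mul_lt_mul_left hH] using hj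
  · rintro _ hi
    obtain ⟨-, j, rfl⟩ := mem_filter.1 hi
    simp [Nat.mul_div_cancel_left j hH]
  · intro j _
    simp [Nat.mul_div_cancel_left j hH]
  · rintro _ hi
    obtain ⟨-, j, rfl⟩ := mem_filter.1 hi
    simp [Nat.mul_div_cancel_left j hH]

theorem le_pow_mul_add_sum_of_le_mul_add {e c : ℕ → ℝ} {γ : ℝ} (hγ : 0 ≤ γ) {M : ℕ}
    (h : ∀ m < M, e (m + 1) ≤ γ * e m + c (m + 1)) :
    e M ≤ γ ^ M * e 0 + ∑ i ∈ range M, γ ^ i * c (M - i) := by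
  induction M with
  | zero => simp
  | succ M ih =>
    have ih := ih fun m hm => h m (by omega)
    calc e (M + 1) ≤ γ * e M + c (M + 1) := h M (by omega)
      _ ≤ γ * (γ ^ M * e 0 + ∑ i ∈ range M, γ ^ i * c (M - i)) + c (M + 1) := by gcongr
      _ = γ ^ (M + 1) * e 0 + ∑ i ∈ range (M + 1), γ ^ i * c (M + 1 - i) := by
        simp only [sum_range_succ', Nat.add_sub_add_right, Nat.sub_zero, pow_succ', mul_add,
          mul_sum, mul_assoc]
        ring

theorem sum_range_pow_mul_ite_dvd_sub {γ : ℝ} (hγ : γ ≠ 1) {H : ℕ} (hH : 0 < H)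
    (hγH : γ ^ H ≠ 1) (T : ℕ) (δ : ℝ) :
    ∑ i ∈ range (H * T), γ ^ i * (if H ∣ H * T - i then 0 else δ) =
      δ * ((γ ^ (H * T) - 1) / (γ - 1)) * (1 - (γ - 1) / (γ ^ H - 1)) := by
  have hterm : ∀ i ∈ range (H * T), γ ^ i * (if H ∣ H * T - i then 0 else δ) =
      δ * γ ^ i - δ * (if H ∣ i then γ ^ i else 0) := by
    intro i hi
    simp only [Nat.dvd_sub_iff_right (mem_range.1 hi).le (dvd_mul_right H T)]
    split_ifs <;> ring
  rw [sum_congr rfl hterm, sum_sub_distrib, ← mul_sum, ← mul_sum, sum_range_mul_ite_dvd hH,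
    geom_sum_eq hγ]
  simp_rw [pow_mul]
  rw [geom_sum_eq hγH]
  have h1 : γ - 1 ≠ 0 := sub_ne_zero.2 hγ
  have h2 : γ ^ H - 1 ≠ 0 := sub_ne_zero.2 hγH
  field_simp

section ResidualBlock

variable {E : Type*} [SeminormedAddCommGroup E]

def residualBlock (G F : E → E) (X : E) : E :=
  X + G X + F (X + G X)

theorem norm_add_map_sub_add_map_le {F : E → E} {θ : ℝ}
    (hF : ∀ X Y, ‖F X - F Y‖ ≤ θ * ‖X - Y‖) (P Q : E) :
    ‖(P + F P) - (Q + F Q)‖ ≤ (1 + θ) * ‖P - Q‖ :=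
  calc ‖(P + F P) - (Q + F Q)‖ = ‖(P - Q) + (F P - F Q)‖ := by congr 1; abel
    _ ≤ ‖P - Q‖ + θ * ‖P - Q‖ := (norm_add_le _ _).trans (by gcongr; exact hF P Q)
    _ = (1 + θ) * ‖P - Q‖ := by ring

theorem norm_add_map_sub_add_map_le_of_norm_sub_le {G Ghat : E → E} {ρ ε : ℝ}
    (hGhat : ∀ X Y, ‖Ghat X - Ghat Y‖ ≤ ρ * ‖X - Y‖) {X Y : E} (hdev : ‖G X - Ghat X‖ ≤ ε) :
    ‖(X + G X) - (Y + Ghat Y)‖ ≤ (1 + ρ) * ‖X - Y‖ + ε :=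
  calc ‖(X + G X) - (Y + Ghat Y)‖ = ‖(X - Y) + (G X - Ghat X) + (Ghat X - Ghat Y)‖ := by
        congr 1; abel
    _ ≤ ‖X - Y‖ + ‖G X - Ghat X‖ + ‖Ghat X - Ghat Y‖ := norm_add₃_le
    _ ≤ ‖X - Y‖ + ε + ρ * ‖X - Y‖ := by gcongr; exact hGhat X Y
    _ = (1 + ρ) * ‖X - Y‖ + ε := by ring

theorem norm_residualBlock_sub_le {G Ghat F : E → E} {ρ θ ε : ℝ} (hθ : 0 ≤ θ)
    (hF : ∀ X Y, ‖F X - F Y‖ ≤ θ * ‖X - Y‖) (hGhat : ∀ X Y, ‖Ghat X - Ghat Y‖ ≤ ρ * ‖X - Y‖)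
    {X Y : E} (hdev : ‖G X - Ghat X‖ ≤ ε) :
    ‖residualBlock G F X - residualBlock Ghat F Y‖ ≤ (1 + θ) * ((1 + ρ) * ‖X - Y‖ + ε) := by
  calc _ ≤ (1 + θ) * ‖(X + G X) - (Y + Ghat Y)‖ := norm_add_map_sub_add_map_le hF _ _
    _ ≤ _ := by gcongr; exact norm_add_map_sub_add_map_le_of_norm_sub_le hGhat hdev

end ResidualBlock

attribute [local instance] Matrix.frobeniusNormedAddCommGroup

theorem fedattn_error_bound_uniform_general
    (L d : ℕ)
    (H T N : ℕ) (hH : 1 ≤ H)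
    (A Ahat F : ℕ → Matrix (Fin L) (Fin d) ℝ → Matrix (Fin L) (Fin d) ℝ)
    (ρ θ : ℕ → ℝ) (σ : ℕ → ℕ → ℝ)
    (ρ0 θ0 : ℝ) (σbar : ℕ → ℝ) (hρ0 : 0 < ρ0) (hθ0 : 0 < θ0)
    (hρu : ∀ m ∈ Finset.Icc 1 (H * T), ρ m ≤ ρ0)
    (hθu : ∀ m ∈ Finset.Icc 1 (H * T), θ m ≤ θ0)
    (hσu : ∀ m ∈ Finset.Icc 1 (H * T), ∀ n ∈ Finset.Icc 1 N, σ m n ≤ σbar n)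
    (hAhat : ∀ m ∈ Finset.Icc 1 (H * T), ∀ X Y, ‖Ahat m X - Ahat m Y‖ ≤ ρ m * ‖X - Y‖)
    (hF : ∀ m ∈ Finset.Icc 1 (H * T), ∀ X Y, ‖F m X - F m Y‖ ≤ θ m * ‖X - Y‖)
    (hdev : ∀ m ∈ Finset.Icc 1 (H * T), ∀ X,
      ‖A m X - Ahat m X‖ ≤ ∑ n ∈ Finset.Icc 1 N, σ m n)
    (Xemb : Matrix (Fin L) (Fin d) ℝ)
    (Xfed Xcen : ℕ → Matrix (Fin L) (Fin d) ℝ)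
    (hfed0 : Xfed 0 = Xemb) (hcen0 : Xcen 0 = Xemb)
    (hfedLocal : ∀ m < H * T, ¬ H ∣ (m + 1) →
      Xfed (m + 1) =
        Xfed m + A (m + 1) (Xfed m) + F (m + 1) (Xfed m + A (m + 1) (Xfed m)))
    (hfedGlobal : ∀ m < H * T, H ∣ (m + 1) →
      Xfed (m + 1) =
        Xfed m + Ahat (m + 1) (Xfed m) + F (m + 1) (Xfed m + Ahat (m + 1) (Xfed m)))
    (hcen : ∀ m < H * T,
      Xcen (m + 1) =
        Xcen m + Ahat (m + 1) (Xcen m) + F (m + 1) (Xcen m + Ahat (m + 1) (Xcen m)))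
    (γ : ℝ) (hγ : γ = (1 + θ0) * (1 + ρ0)) :
    ‖Xfed (H * T) - Xcen (H * T)‖ ≤
      ((1 + θ0) * ∑ n ∈ Finset.Icc 1 N, σbar n) *
        ((γ ^ (H * T) - 1) / (γ - 1)) * (1 - (γ - 1) / (γ ^ H - 1)) := by
  have hγ1 : 1 < γ := by rw [hγ]; nlinarith
  set δ := (1 + θ0) * ∑ n ∈ Finset.Icc 1 N, σbar n
  have hstep : ∀ m < H * T, ‖Xfed (m + 1) - Xcen (m + 1)‖ ≤
      γ * ‖Xfed m - Xcen m‖ + if H ∣ m + 1 then 0 else δ := by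
    intro m hm
    have hmem : m + 1 ∈ Icc 1 (H * T) := mem_Icc.2 ⟨by omega, hm⟩
    have hFm : ∀ X Y, ‖F (m + 1) X - F (m + 1) Y‖ ≤ θ0 * ‖X - Y‖ := fun X Y =>
      (hF _ hmem X Y).trans (mul_le_mul_of_nonneg_right (hθu _ hmem) (norm_nonneg _))
    have hAhatm : ∀ X Y, ‖Ahat (m + 1) X - Ahat (m + 1) Y‖ ≤ ρ0 * ‖X - Y‖ := fun X Y =>
      (hAhat _ hmem X Y).trans (mul_le_mul_of_nonneg_right (hρu _ hmem) (norm_nonneg _))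
    by_cases hglobal : H ∣ m + 1
    · rw [hfedGlobal m hm hglobal, hcen m hm, if_pos hglobal, hγ]
      calc _ ≤ (1 + θ0) * ((1 + ρ0) * ‖Xfed m - Xcen m‖ + 0) :=
            norm_residualBlock_sub_le hθ0.le hFm hAhatm (by rw [sub_self, norm_zero])
        _ = _ := by ring
    · rw [hfedLocal m hm hglobal, hcen m hm, if_neg hglobal]
      calc _ ≤ (1 + θ0) * ((1 + ρ0) * ‖Xfed m - Xcen m‖ + ∑ n ∈ Icc 1 N, σ (m + 1) n) :=
            norm_residualBlock_sub_le hθ0.le hFm hAhatm (hdev _ hmem _)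
        _ ≤ (1 + θ0) * ((1 + ρ0) * ‖Xfed m - Xcen m‖ + ∑ n ∈ Icc 1 N, σbar n) := by
            gcongr with n hn
            exact hσu _ hmem n hn
        _ = γ * ‖Xfed m - Xcen m‖ + δ := by rw [hγ]; ring
  have hbound := le_pow_mul_add_sum_of_le_mul_add
    (e := fun m => ‖Xfed m - Xcen m‖) (c := fun k => if H ∣ k then 0 else δ) (by linarith) hstep
  rwa [hfed0, hcen0, sub_self, norm_zero, mul_zero, zero_add,
    sum_range_pow_mul_ite_dvd_sub hγ1.ne' hH (one_lt_pow₀ hγ1 (by omega)).ne'] at hbound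

theorem fedattn_error_bound_uniform
    (L d : ℕ) (hL : 0 < L) (hd : 0 < d)
    (H T N : ℕ) (hH : 1 ≤ H) (hT : 1 ≤ T) (hN : 1 ≤ N)
    (A Ahat F : ℕ → Matrix (Fin L) (Fin d) ℝ → Matrix (Fin L) (Fin d) ℝ)
    (ρ θ : ℕ → ℝ) (σ : ℕ → ℕ → ℝ)
    (ρ0 θ0 : ℝ) (σbar : ℕ → ℝ) (hρ0 : 0 < ρ0) (hθ0 : 0 < θ0)
    (hρ : ∀ m ∈ Finset.Icc 1 (H * T), 0 < ρ m)
    (hθ : ∀ m ∈ Finset.Icc 1 (H * T), 0 < θ m)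
    (hσ : ∀ m ∈ Finset.Icc 1 (H * T), ∀ n ∈ Finset.Icc 1 N, 0 ≤ σ m n)
    (hρu : ∀ m ∈ Finset.Icc 1 (H * T), ρ m ≤ ρ0)
    (hθu : ∀ m ∈ Finset.Icc 1 (H * T), θ m ≤ θ0)
    (hσu : ∀ m ∈ Finset.Icc 1 (H * T), ∀ n ∈ Finset.Icc 1 N, σ m n ≤ σbar n)
    (hAhat : ∀ m ∈ Finset.Icc 1 (H * T), ∀ X Y, ‖Ahat m X - Ahat m Y‖ ≤ ρ m * ‖X - Y‖)
    (hF : ∀ m ∈ Finset.Icc 1 (H * T), ∀ X Y, ‖F m X - F m Y‖ ≤ θ m * ‖X - Y‖)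
    (hdev : ∀ m ∈ Finset.Icc 1 (H * T), ∀ X,
      ‖A m X - Ahat m X‖ ≤ ∑ n ∈ Finset.Icc 1 N, σ m n)
    (Xemb : Matrix (Fin L) (Fin d) ℝ)
    (Xfed Xcen : ℕ → Matrix (Fin L) (Fin d) ℝ)
    (hfed0 : Xfed 0 = Xemb) (hcen0 : Xcen 0 = Xemb)
    (hfedLocal : ∀ m < H * T, ¬ H ∣ (m + 1) →
      Xfed (m + 1) =
        Xfed m + A (m + 1) (Xfed m) + F (m + 1) (Xfed m + A (m + 1) (Xfed m)))
    (hfedGlobal : ∀ m < H * T, H ∣ (m + 1) →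
      Xfed (m + 1) =
        Xfed m + Ahat (m + 1) (Xfed m) + F (m + 1) (Xfed m + Ahat (m + 1) (Xfed m)))
    (hcen : ∀ m < H * T,
      Xcen (m + 1) =
        Xcen m + Ahat (m + 1) (Xcen m) + F (m + 1) (Xcen m + Ahat (m + 1) (Xcen m)))
    (γ : ℝ) (hγ : γ = (1 + θ0) * (1 + ρ0)) :
    ‖Xfed (H * T) - Xcen (H * T)‖ ≤
      ((1 + θ0) * ∑ n ∈ Finset.Icc 1 N, σbar n) *
        ((γ ^ (H * T) - 1) / (γ - 1)) * (1 - (γ - 1) / (γ ^ H - 1)) :=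
  fedattn_error_bound_uniform_general L d H T N hH A Ahat F ρ θ σ ρ0 θ0 σbar hρ0 hθ0 hρu hθu hσu
    hAhat hF hdev Xemb Xfed Xcen hfed0 hcen0 hfedLocal hfedGlobal hcen γ hγ
end

section
/- Let γ > 1 be real and H ≥ 1 an integer, and define e(H) = 1 − (γ − 1)/(γ^H − 1). Then the marginal decrease of the communication frequency 1/H satisfies 1/H − 1/(H+1) = 1/(H(H+1)), and the limiting marginal increase of the approximation factor satisfies lim_{γ→1⁺} (e(H+1) − e(H)) = 1/(H(H+1)); in particular both marginal effects decay at the rate 1/(H(H+1)) = O(1/H²) in H. (The paper's Remark 5: the marginal communication saving and the marginal approximation-error increase when moving from H to H+1 local forwards are of the same magnitude.) -/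
/-!
Since `γ^H - 1 = (γ - 1) ∑_{i<H} γ^i`, away from `γ = 1` the approximation factor is
`e(H) = 1 - (∑_{i<H} γ^i)⁻¹`, which is continuous at `γ = 1` with value `1 - 1/H`.
Hence `e(H+1) - e(H) → 1/H - 1/(H+1) = 1/(H(H+1))`.
-/

open Filter Topology Finset

noncomputable def approxFactor (γ : ℝ) (H : ℕ) : ℝ :=
  1 - (γ - 1) / (γ ^ H - 1)

lemma approxFactor_eq_one_sub_inv_geom_sum {γ : ℝ} (hγ : γ ≠ 1) (H : ℕ) :
    approxFactor γ H = 1 - (∑ i ∈ range H, γ ^ i)⁻¹ := by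
  rw [approxFactor, geom_sum_eq hγ, inv_div]

lemma tendsto_inv_geom_sum_nhds_one (H : ℕ) :
    Tendsto (fun γ : ℝ => (∑ i ∈ range H, γ ^ i)⁻¹) (𝓝 1) (𝓝 (H : ℝ)⁻¹) := by
  rcases eq_or_ne H 0 with rfl | hH
  · simp
  have hsum : Tendsto (fun γ : ℝ => ∑ i ∈ range H, γ ^ i) (𝓝 1) (𝓝 (H : ℝ)) := by
    simpa using (continuous_finsetSum (range H) fun i _ => continuous_pow i).tendsto (1 : ℝ)
  exact hsum.inv₀ (Nat.cast_ne_zero.mpr hH)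

lemma tendsto_approxFactor_nhdsNE_one (H : ℕ) :
    Tendsto (fun γ => approxFactor γ H) (𝓝[≠] 1) (𝓝 (1 - (H : ℝ)⁻¹)) := by
  refine ((tendsto_inv_geom_sum_nhds_one H).mono_left nhdsWithin_le_nhds).const_sub 1 |>.congr' ?_
  filter_upwards [self_mem_nhdsWithin] with γ hγ
  exact (approxFactor_eq_one_sub_inv_geom_sum hγ H).symm

theorem fedattn_marginal_effects_general (H : ℕ) (hH : 1 ≤ H) :
    (1 / (H : ℝ) - 1 / ((H : ℝ) + 1) = 1 / ((H : ℝ) * ((H : ℝ) + 1))) ∧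
    Filter.Tendsto
      (fun g : ℝ => (1 - (g - 1) / (g ^ (H + 1) - 1)) - (1 - (g - 1) / (g ^ H - 1)))
      (nhdsWithin 1 (Set.Ioi 1)) (nhds (1 / ((H : ℝ) * ((H : ℝ) + 1)))) := by
  have hH₀ : (H : ℝ) ≠ 0 := by positivity
  have hstep : 1 / (H : ℝ) - 1 / ((H : ℝ) + 1) = 1 / ((H : ℝ) * ((H : ℝ) + 1)) := by
    field_simp
    ring
  refine ⟨hstep, ?_⟩
  have hlim := ((tendsto_approxFactor_nhdsNE_one (H + 1)).sub
    (tendsto_approxFactor_nhdsNE_one H)).mono_left (nhdsGT_le_nhdsNE 1)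
  have hvalue : 1 - ((H + 1 : ℕ) : ℝ)⁻¹ - (1 - (H : ℝ)⁻¹) = 1 / ((H : ℝ) * ((H : ℝ) + 1)) := by
    rw [← hstep]
    push_cast
    ring
  rwa [hvalue] at hlim

theorem fedattn_marginal_effects (γ : ℝ) (hγ : 1 < γ) (H : ℕ) (hH : 1 ≤ H) :
    (1 / (H : ℝ) - 1 / ((H : ℝ) + 1) = 1 / ((H : ℝ) * ((H : ℝ) + 1))) ∧
    Filter.Tendsto
      (fun g : ℝ => (1 - (g - 1) / (g ^ (H + 1) - 1)) - (1 - (g - 1) / (g ^ H - 1)))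
      (nhdsWithin 1 (Set.Ioi 1)) (nhds (1 / ((H : ℝ) * ((H : ℝ) + 1)))) :=
  fedattn_marginal_effects_general H hH
end
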